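/- The vector field X is tangent to the Brieskorn variety and preserves both H_ε and Δ_ε: for every z ∈ ℂ^{n+1}, the real directional derivative at z in the direction X(z) of each of the three functions f(z) = z₀² + z₁² − 2i·∑_{j=1}^m z_{2j}z_{2j+1}, z ↦ ∑_{k=0}^n |z_k|², and Δ_ε vanishes. -/

import Mathlib

open Complex

/-- The index `2(j+1)` in `Fin (2m+2)`, for `j : Fin m`. -/
def idxA (m : ℕ) (j : Fin m) : Fin (2 * m + 2) := ⟨2 * j.val + 2, by have := j.isLt; omega⟩

/-- The index `2(j+1)+1` in `Fin (2m+2)`, for `j : Fin m`. -/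
def idxB (m : ℕ) (j : Fin m) : Fin (2 * m + 2) := ⟨2 * j.val + 3, by have := j.isLt; omega⟩

/-- `Δ_ε(z) = ∑_{j=1}^m ε_j(|z_{2j}|² − |z_{2j+1}|²)`. -/
noncomputable def DeltaEps (m : ℕ) (ε : Fin m → ℝ) (z : Fin (2 * m + 2) → ℂ) : ℝ :=
  ∑ j : Fin m, ε j * (‖z (idxA m j)‖ ^ 2 - ‖z (idxB m j)‖ ^ 2)

/-- The vector field `X` on `ℂ^{n+1}` (`n = 2m+1`): `X(z)₀ = X(z)₁ = 0`,
`X(z)_{2j} = i·ε_j·z_{2j}`, `X(z)_{2j+1} = −i·ε_j·z_{2j+1}`. -/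
noncomputable def Xvf (m : ℕ) (ε : Fin m → ℝ) (z : Fin (2 * m + 2) → ℂ) :
    Fin (2 * m + 2) → ℂ := fun k =>
  if h : k.val ≤ 1 then 0
  else if k.val % 2 = 0 then
    Complex.I * ((ε ⟨k.val / 2 - 1, by have := k.isLt; omega⟩ : ℝ) : ℂ) * z k
  else
    -(Complex.I * ((ε ⟨k.val / 2 - 1, by have := k.isLt; omega⟩ : ℝ) : ℂ) * z k)

/-! `X(z)_k = i·c_k·z_k` with real weights `c = (0, 0, ε₁, −ε₁, …, ε_m, −ε_m)`, so `X` generates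
the unitary torus flow `Φ_t(z)_k = e^{i t c_k} z_k`. This flow fixes `z₀, z₁`, preserves every
`|z_k|`, and multiplies `z_{2j} z_{2j+1}` by `e^{i t (ε_j − ε_j)} = 1`; hence `f`, `∑ |z_k|²` and `Δ_ε`
are constant along it, and differentiating `t ↦ g(Φ_t z)` at `t = 0` gives `dg_z(X(z)) = 0`. -/

theorem fderiv_apply_eq_zero_of_comp_eq_const {E F : Type*} [NormedAddCommGroup E]
    [NormedSpace ℝ E] [NormedAddCommGroup F] [NormedSpace ℝ F] {f : E → F} {γ : ℝ → E} {v : E}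
    (hf : DifferentiableAt ℝ f (γ 0)) (hγ : HasDerivAt γ v 0) (hfγ : ∀ t, f (γ t) = f (γ 0)) :
    fderiv ℝ f (γ 0) v = 0 := by
  have hconst : HasDerivAt (f ∘ γ) 0 0 := by
    rw [show f ∘ γ = fun _ => f (γ 0) from funext hfγ]
    exact hasDerivAt_const _ _
  exact (hf.hasFDerivAt.comp_hasDerivAt 0 hγ).unique hconst

section TorusFlow

variable {ι : Type*} (c : ι → ℝ)

noncomputable def torusFlow (t : ℝ) (z : ι → ℂ) : ι → ℂ := fun k => exp (t * c k * I) * z k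

@[simp]
theorem torusFlow_zero (z : ι → ℂ) : torusFlow c 0 z = z := by
  ext k; simp [torusFlow]

theorem hasDerivAt_torusFlow (z : ι → ℂ) :
    HasDerivAt (fun t => torusFlow c t z) (fun k => I * c k * z k) 0 := by
  rw [hasDerivAt_pi]
  intro k
  have hexp : HasDerivAt (fun t : ℝ => exp (t * c k * I)) (c k * I) 0 := by
    simpa using (((hasDerivAt_id (0 : ℝ)).ofReal_comp.mul_const (c k : ℂ)).mul_const I).cexp
  rw [mul_comm I]
  exact hexp.mul_const (z k)

@[simp]
theorem norm_torusFlow_apply (t : ℝ) (z : ι → ℂ) (k : ι) : ‖torusFlow c t z k‖ = ‖z k‖ := by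
  rw [torusFlow, norm_mul, ← ofReal_mul, norm_exp_ofReal_mul_I, one_mul]

theorem torusFlow_apply_of_weight_eq_zero {k : ι} (hk : c k = 0) (t : ℝ) (z : ι → ℂ) :
    torusFlow c t z k = z k := by
  simp [torusFlow, hk]

theorem torusFlow_mul_torusFlow_of_weight_add_eq_zero {a b : ι} (hab : c a + c b = 0) (t : ℝ)
    (z : ι → ℂ) : torusFlow c t z a * torusFlow c t z b = z a * z b := by
  have hexp : exp (t * c a * I) * exp (t * c b * I) = 1 := by
    rw [← exp_add, ← add_mul, ← mul_add, ← ofReal_add, hab]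
    simp
  calc torusFlow c t z a * torusFlow c t z b
      = exp (t * c a * I) * exp (t * c b * I) * (z a * z b) := by simp only [torusFlow]; ring
    _ = z a * z b := by rw [hexp, one_mul]

end TorusFlow

section Weights

variable (m : ℕ) (ε : Fin m → ℝ)

noncomputable def Xweight (k : Fin (2 * m + 2)) : ℝ :=
  if h : k.val ≤ 1 then 0
  else if k.val % 2 = 0 then ε ⟨k.val / 2 - 1, by have := k.isLt; omega⟩
  else -ε ⟨k.val / 2 - 1, by have := k.isLt; omega⟩

theorem Xvf_eq_I_mul_Xweight_mul (z : Fin (2 * m + 2) → ℂ) :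
    Xvf m ε z = fun k => I * Xweight m ε k * z k := by
  ext k
  simp only [Xvf, Xweight]
  split_ifs <;> push_cast <;> ring

theorem Xweight_of_le_one {k : Fin (2 * m + 2)} (hk : k.val ≤ 1) : Xweight m ε k = 0 :=
  dif_pos hk

theorem Xweight_idxA (j : Fin m) : Xweight m ε (idxA m j) = ε j := by
  rw [Xweight, dif_neg (by simp [idxA]), if_pos (by simp [idxA])]
  congr 1
  ext
  simp [idxA]

theorem Xweight_idxB (j : Fin m) : Xweight m ε (idxB m j) = -ε j := by
  rw [Xweight, dif_neg (by simp [idxB]), if_neg (by simp [idxB])]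
  congr 2
  ext
  simp [idxB]
  omega

end Weights

theorem fderiv_Xvf_eq_zero_of_torusFlow_invariant {F : Type*} [NormedAddCommGroup F]
    [NormedSpace ℝ F] {m : ℕ} {ε : Fin m → ℝ} {f : (Fin (2 * m + 2) → ℂ) → F}
    {z : Fin (2 * m + 2) → ℂ} (hf : DifferentiableAt ℝ f z)
    (hinv : ∀ t y, f (torusFlow (Xweight m ε) t y) = f y) : fderiv ℝ f z (Xvf m ε z) = 0 := by
  have h := fderiv_apply_eq_zero_of_comp_eq_const (f := f) (by rwa [torusFlow_zero])
    (hasDerivAt_torusFlow (Xweight m ε) z) (by simp [hinv])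
  rwa [torusFlow_zero, ← Xvf_eq_I_mul_Xweight_mul] at h

/-- The vector field `X` is tangent to the Brieskorn variety and preserves `H_ε` and `Δ_ε`:
the real directional derivative at `z` in the direction `X(z)` of each of
`f(z) = z₀² + z₁² − 2i·∑_j z_{2j}z_{2j+1}`, of `z ↦ ∑_k |z_k|²`, and of `Δ_ε` vanishes. -/
theorem Xvf_tangent_and_preserves (m : ℕ) (ε : Fin m → ℝ)
    (z : Fin (2 * m + 2) → ℂ) :
    fderiv ℝ (fun y : Fin (2 * m + 2) → ℂ =>
        y ⟨0, by omega⟩ ^ 2 + y ⟨1, by omega⟩ ^ 2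
          - 2 * Complex.I * ∑ j : Fin m, y (idxA m j) * y (idxB m j)) z (Xvf m ε z) = 0 ∧
    fderiv ℝ (fun y : Fin (2 * m + 2) → ℂ => ∑ k, ‖y k‖ ^ 2) z (Xvf m ε z) = 0 ∧
    fderiv ℝ (DeltaEps m ε) z (Xvf m ε z) = 0 := by
  have hnormSq (k : Fin (2 * m + 2)) :
      DifferentiableAt ℝ (fun y : Fin (2 * m + 2) → ℂ => ‖y k‖ ^ 2) z :=
    (differentiableAt_apply k z).norm_sq ℝ
  have hweight0 : Xweight m ε ⟨0, by omega⟩ = 0 := Xweight_of_le_one m ε zero_le_one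
  have hweight1 : Xweight m ε ⟨1, by omega⟩ = 0 := Xweight_of_le_one m ε le_rfl
  have hweightAB (j : Fin m) : Xweight m ε (idxA m j) + Xweight m ε (idxB m j) = 0 := by
    rw [Xweight_idxA, Xweight_idxB, add_neg_cancel]
  refine ⟨fderiv_Xvf_eq_zero_of_torusFlow_invariant (by fun_prop) fun t y => ?_,
    fderiv_Xvf_eq_zero_of_torusFlow_invariant (.fun_sum fun k _ => hnormSq k)
      fun t y => by simp,
    fderiv_Xvf_eq_zero_of_torusFlow_invariant
      (.fun_sum fun j _ => ((hnormSq _).sub (hnormSq _)).const_mul _)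
      fun t y => by simp [DeltaEps]⟩
  simp only [torusFlow_apply_of_weight_eq_zero _ hweight0,
    torusFlow_apply_of_weight_eq_zero _ hweight1,
    torusFlow_mul_torusFlow_of_weight_add_eq_zero _ (hweightAB _)]
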